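/- The discrete topological complexity is an invariant of strong homotopy type: if K and L have the same strong homotopy type then TC(K) = TC(L). -/

import Mathlib

attribute [local instance] Classical.decEq

/-- An abstract simplicial complex on vertex set `V`. -/
structure SC (V : Type) where
  faces : Set (Finset V)
  down_closed : ∀ {σ τ : Finset V}, σ ∈ faces → τ ⊆ σ → τ.Nonempty → τ ∈ faces

/-- A vertex map inducing a simplicial map `K → L`. -/
def IsSimplicialMap {V W : Type} (K : SC V) (L : SC W) (f : V → W) : Prop :=
  ∀ σ ∈ K.faces, σ.image f ∈ L.faces

/-- Two maps are contiguous: for each simplex, the union of images is a simplex. -/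
def Contiguous {V W : Type} (K : SC V) (L : SC W) (f g : V → W) : Prop :=
  ∀ σ ∈ K.faces, σ.image f ∪ σ.image g ∈ L.faces

/-- Being in the same contiguity class: connected by a finite chain of contiguous maps. -/
def ContigClass {V W : Type} (K : SC V) (L : SC W) : (V → W) → (V → W) → Prop :=
  Relation.ReflTransGen (Contiguous K L)

/-- The categorical product of two simplicial complexes. -/
def prodSC {V W : Type} (K : SC V) (L : SC W) : SC (V × W) where
  faces := {σ | σ.image Prod.fst ∈ K.faces ∧ σ.image Prod.snd ∈ L.faces}
  down_closed := fun hσ hτσ hne =>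
    ⟨K.down_closed hσ.1 (Finset.image_subset_image hτσ) (hne.image _),
     L.down_closed hσ.2 (Finset.image_subset_image hτσ) (hne.image _)⟩

/-- `Ω` is a Farber subcomplex of `K Π K`: a subcomplex admitting a simplicial map
`s : Ω → K` with `Δ ∘ s` in the contiguity class of the inclusion. -/
def IsFarber {V : Type} (K : SC V) (Ω : SC (V × V)) : Prop :=
  Ω.faces ⊆ (prodSC K K).faces ∧
  ∃ s : V × V → V, IsSimplicialMap Ω K s ∧
    ContigClass Ω (prodSC K K) (fun p => (s p, s p)) id

/-- `K Π K` is covered by `n + 1` Farber subcomplexes. -/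
def TCle {V : Type} (K : SC V) (n : ℕ) : Prop :=
  ∃ Ω : Fin (n + 1) → SC (V × V), (∀ i, IsFarber K (Ω i)) ∧
    ∀ σ ∈ (prodSC K K).faces, ∃ i, σ ∈ (Ω i).faces

/-- Discrete topological complexity. -/
noncomputable def TCdisc {V : Type} (K : SC V) : ℕ∞ :=
  sInf {n : ℕ∞ | ∃ m : ℕ, n = (m : ℕ∞) ∧ TCle K m}

/-- A categorical subcomplex: the inclusion is in the contiguity class of a constant map
at a vertex of `K`. -/
def IsCategorical {V : Type} (K : SC V) (L : SC V) : Prop :=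
  L.faces ⊆ K.faces ∧ ∃ v : V, {v} ∈ K.faces ∧ ContigClass L K id (fun _ => v)

/-- `K` is covered by `n + 1` categorical subcomplexes. -/
def scatLe {V : Type} (K : SC V) (n : ℕ) : Prop :=
  ∃ L : Fin (n + 1) → SC V, (∀ i, IsCategorical K (L i)) ∧
    ∀ σ ∈ K.faces, ∃ i, σ ∈ (L i).faces

/-- Normalized simplicial LS-category. -/
noncomputable def scat {V : Type} (K : SC V) : ℕ∞ :=
  sInf {n : ℕ∞ | ∃ m : ℕ, n = (m : ℕ∞) ∧ scatLe K m}

/-- The preimage subcomplex of a subcomplex `Ω` under a vertex map `f`,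
inside an ambient complex `M`. -/
def preimSC {V W : Type} (M : SC W) (Ω : SC V) (f : W → V) : SC W where
  faces := {τ | τ ∈ M.faces ∧ τ.image f ∈ Ω.faces}
  down_closed := fun hσ hτσ hne =>
    ⟨M.down_closed hσ.1 hτσ hne,
     Ω.down_closed hσ.2 (Finset.image_subset_image hτσ) (hne.image _)⟩

/-- `K` and `L` have the same strong homotopy type. -/
def StrongEquiv {V W : Type} (K : SC V) (L : SC W) : Prop :=
  ∃ (φ : V → W) (ψ : W → V), IsSimplicialMap K L φ ∧ IsSimplicialMap L K ψ ∧
    ContigClass L L (φ ∘ ψ) id ∧ ContigClass K K (ψ ∘ φ) id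

/-- `K` is edge-path connected. -/
def EdgeConn {V : Type} (K : SC V) : Prop :=
  ∀ v w : V, {v} ∈ K.faces → {w} ∈ K.faces →
    Relation.ReflTransGen (fun a b => ({a, b} : Finset V) ∈ K.faces) v w

/-- `K` is strongly collapsible: the identity is in the contiguity class of a constant map. -/
def StronglyCollapsible {V : Type} (K : SC V) : Prop :=
  ∃ v : V, {v} ∈ K.faces ∧ ContigClass K K id (fun _ => v)

/-! Pulling a Farber cover of `L Π L` back along `φ × φ` gives a Farber cover of `K Π K`
whenever `ψ ∘ φ ∼ 1_K`: if `s` is a section over `Ω`, then `ψ ∘ s ∘ (φ × φ)` is one over the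
preimage, because `Δ ∘ ψ ∘ s ∘ (φ × φ) = (ψ × ψ) ∘ Δ ∘ s ∘ (φ × φ) ∼ (ψ × ψ) ∘ (φ × φ) ∼ 1`.
So `TC(K) ≤ TC(L)`, and a strong equivalence gives this in both directions. -/

variable {U V W V₁ V₂ W₁ W₂ : Type}

def StronglyDominatedBy (K : SC V) (L : SC W) : Prop :=
  ∃ (φ : V → W) (ψ : W → V), IsSimplicialMap K L φ ∧ IsSimplicialMap L K ψ ∧
    ContigClass K K (ψ ∘ φ) id

theorem StrongEquiv.stronglyDominatedBy {K : SC V} {L : SC W} (h : StrongEquiv K L) :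
    StronglyDominatedBy K L :=
  let ⟨φ, ψ, hφ, hψ, _, hK⟩ := h
  ⟨φ, ψ, hφ, hψ, hK⟩

theorem StrongEquiv.stronglyDominatedBy_symm {K : SC V} {L : SC W} (h : StrongEquiv K L) :
    StronglyDominatedBy L K :=
  let ⟨φ, ψ, hφ, hψ, hL, _⟩ := h
  ⟨ψ, φ, hψ, hφ, hL⟩

namespace IsSimplicialMap

theorem id (K : SC V) : IsSimplicialMap K K id := by
  intro σ hσ
  rwa [Finset.image_id]

theorem comp {K : SC U} {L : SC V} {M : SC W} {f : U → V} {g : V → W}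
    (hg : IsSimplicialMap L M g) (hf : IsSimplicialMap K L f) :
    IsSimplicialMap K M (g ∘ f) := by
  intro σ hσ
  rw [← Finset.image_image]
  exact hg _ (hf σ hσ)

theorem prodMap {K₁ : SC V₁} {K₂ : SC V₂} {L₁ : SC W₁} {L₂ : SC W₂} {f : V₁ → W₁}
    {g : V₂ → W₂} (hf : IsSimplicialMap K₁ L₁ f) (hg : IsSimplicialMap K₂ L₂ g) :
    IsSimplicialMap (prodSC K₁ K₂) (prodSC L₁ L₂) (Prod.map f g) := by
  intro σ hσ
  constructor
  · simpa only [Finset.image_image, Prod.map_fst'] using hf _ hσ.1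
  · simpa only [Finset.image_image, Prod.map_snd'] using hg _ hσ.2

theorem contiguous_self {K : SC V} {L : SC W} {f : V → W} (hf : IsSimplicialMap K L f) :
    Contiguous K L f f := by
  intro σ hσ
  rw [Finset.union_self]
  exact hf σ hσ

end IsSimplicialMap

namespace Contiguous

theorem comp_right {K : SC U} {L : SC V} {M : SC W} {F : U → V} {a b : V → W}
    (h : Contiguous L M a b) (hF : IsSimplicialMap K L F) :
    Contiguous K M (a ∘ F) (b ∘ F) := by
  intro σ hσ
  simpa only [Finset.image_image] using h _ (hF σ hσ)

theorem comp_left {K : SC U} {L : SC V} {M : SC W} {a b : U → V} {G : V → W}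
    (h : Contiguous K L a b) (hG : IsSimplicialMap L M G) :
    Contiguous K M (G ∘ a) (G ∘ b) := by
  intro σ hσ
  simpa only [Finset.image_union, Finset.image_image] using hG _ (h σ hσ)

theorem mono {K K' : SC V} {L : SC W} {a b : V → W} (h : Contiguous K L a b)
    (hK : K'.faces ⊆ K.faces) : Contiguous K' L a b :=
  fun σ hσ => h σ (hK hσ)

theorem prodMap {K₁ : SC V₁} {K₂ : SC V₂} {L₁ : SC W₁} {L₂ : SC W₂} {a b : V₁ → W₁}
    {c d : V₂ → W₂} (hab : Contiguous K₁ L₁ a b) (hcd : Contiguous K₂ L₂ c d) :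
    Contiguous (prodSC K₁ K₂) (prodSC L₁ L₂) (Prod.map a c) (Prod.map b d) := by
  intro σ hσ
  constructor
  · simpa only [Finset.image_union, Finset.image_image, Prod.map_fst'] using hab _ hσ.1
  · simpa only [Finset.image_union, Finset.image_image, Prod.map_snd'] using hcd _ hσ.2

end Contiguous

namespace ContigClass

theorem comp_right {K : SC U} {L : SC V} {M : SC W} {F : U → V} {a b : V → W}
    (h : ContigClass L M a b) (hF : IsSimplicialMap K L F) :
    ContigClass K M (a ∘ F) (b ∘ F) :=
  Relation.ReflTransGen.lift (· ∘ F) (fun _ _ hc => hc.comp_right hF) _ _ h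

theorem comp_left {K : SC U} {L : SC V} {M : SC W} {a b : U → V} {G : V → W}
    (h : ContigClass K L a b) (hG : IsSimplicialMap L M G) :
    ContigClass K M (G ∘ a) (G ∘ b) :=
  Relation.ReflTransGen.lift (G ∘ ·) (fun _ _ hc => hc.comp_left hG) _ _ h

theorem mono {K K' : SC V} {L : SC W} {a b : V → W} (h : ContigClass K L a b)
    (hK : K'.faces ⊆ K.faces) : ContigClass K' L a b :=
  Relation.ReflTransGen.mono (fun _ _ hc => hc.mono hK) _ _ h

theorem prodMap_left {K₁ : SC V₁} {K₂ : SC V₂} {L₁ : SC W₁} {L₂ : SC W₂} {a b : V₁ → W₁}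
    {c : V₂ → W₂} (h : ContigClass K₁ L₁ a b) (hc : IsSimplicialMap K₂ L₂ c) :
    ContigClass (prodSC K₁ K₂) (prodSC L₁ L₂) (Prod.map a c) (Prod.map b c) :=
  Relation.ReflTransGen.lift (Prod.map · c)
    (fun _ _ hab => hab.prodMap hc.contiguous_self) _ _ h

theorem prodMap_right {K₁ : SC V₁} {K₂ : SC V₂} {L₁ : SC W₁} {L₂ : SC W₂} {a : V₁ → W₁}
    {c d : V₂ → W₂} (ha : IsSimplicialMap K₁ L₁ a) (h : ContigClass K₂ L₂ c d) :
    ContigClass (prodSC K₁ K₂) (prodSC L₁ L₂) (Prod.map a c) (Prod.map a d) :=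
  Relation.ReflTransGen.lift (Prod.map a ·)
    (fun _ _ hcd => ha.contiguous_self.prodMap hcd) _ _ h

end ContigClass

theorem IsFarber.pullback {K : SC V} {L : SC W} {φ : V → W} {ψ : W → V}
    (hφ : IsSimplicialMap K L φ) (hψ : IsSimplicialMap L K ψ)
    (hψφ : ContigClass K K (ψ ∘ φ) id) {Ω : SC (W × W)} (hΩ : IsFarber L Ω) :
    IsFarber K (preimSC (prodSC K K) Ω (Prod.map φ φ)) := by
  obtain ⟨-, s, hs, hsΔ⟩ := hΩ
  set P := preimSC (prodSC K K) Ω (Prod.map φ φ)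
  have hPK : P.faces ⊆ (prodSC K K).faces := fun _ hσ => hσ.1
  have hPΩ : IsSimplicialMap P Ω (Prod.map φ φ) := fun _ hσ => hσ.2
  have hψ₂ : IsSimplicialMap (prodSC L L) (prodSC K K) (Prod.map ψ ψ) := hψ.prodMap hψ
  have hΔ : ContigClass P (prodSC K K) (Prod.map ψ ψ ∘ (fun q => (s q, s q)) ∘ Prod.map φ φ)
      (Prod.map (ψ ∘ φ) (ψ ∘ φ)) :=
    (hsΔ.comp_right hPΩ).comp_left hψ₂
  have hψφ₂ : ContigClass (prodSC K K) (prodSC K K) (Prod.map (ψ ∘ φ) (ψ ∘ φ)) id :=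
    (hψφ.prodMap_left (hψ.comp hφ)).trans (hψφ.prodMap_right (IsSimplicialMap.id K))
  exact ⟨hPK, ψ ∘ s ∘ Prod.map φ φ, hψ.comp (hs.comp hPΩ), hΔ.trans (hψφ₂.mono hPK)⟩

theorem TCle.of_stronglyDominatedBy {K : SC V} {L : SC W} (hKL : StronglyDominatedBy K L)
    {n : ℕ} (hL : TCle L n) : TCle K n := by
  obtain ⟨φ, ψ, hφ, hψ, hψφ⟩ := hKL
  obtain ⟨Ω, hΩ, hcover⟩ := hL
  refine ⟨fun i => preimSC (prodSC K K) (Ω i) (Prod.map φ φ),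
    fun i => (hΩ i).pullback hφ hψ hψφ, fun σ hσ => ?_⟩
  obtain ⟨i, hi⟩ := hcover _ (hφ.prodMap hφ σ hσ)
  exact ⟨i, hσ, hi⟩

theorem TCdisc_le_of_stronglyDominatedBy {K : SC V} {L : SC W}
    (hKL : StronglyDominatedBy K L) : TCdisc K ≤ TCdisc L :=
  sInf_le_sInf fun _ ⟨m, hm, hL⟩ => ⟨m, hm, hL.of_stronglyDominatedBy hKL⟩

theorem TCdisc_strong_homotopy_invariant {V W : Type} (K : SC V) (L : SC W)
    (h : StrongEquiv K L) : TCdisc K = TCdisc L :=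
  le_antisymm (TCdisc_le_of_stronglyDominatedBy h.stronglyDominatedBy)
    (TCdisc_le_of_stronglyDominatedBy h.stronglyDominatedBy_symm)
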